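/- Let p ∈ (1,∞). For every ε > 0 there exists a constant c_ε > 0, depending only on p and ε (in particular independent of δ), such that for all δ ≥ 0 and all s, t ≥ 0 one has both t·s ≤ ε·φ(t) + c_ε·φ*(s) and t·φ'(s) + φ'(t)·s ≤ ε·φ(t) + c_ε·φ(s). -/

import Mathlib

/-- The N-function `φ = φ_{p,δ}`, `φ(t) = ∫₀ᵗ (δ+s)^(p-2)·s ds`. -/
noncomputable def phiFun (p δ t : ℝ) : ℝ := ∫ s in (0:ℝ)..t, (δ + s) ^ (p - 2) * s

/-- The derivative `φ'(t) = (δ+t)^(p-2)·t`. -/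
noncomputable def phiDeriv (p δ t : ℝ) : ℝ := (δ + t) ^ (p - 2) * t

/-- The convex conjugate of an N-function: `ψ*(s) = sup_{t ≥ 0} (s·t − ψ(t))`. -/
noncomputable def conjFun (ψ : ℝ → ℝ) (s : ℝ) : ℝ :=
  sSup ((fun t => s * t - ψ t) '' Set.Ici 0)

/-!
Everything rests on the scaling bound `φ'(k u) ≤ max(k^(p-1), k) · φ'(u)` for `k > 0`,
uniform in `δ`, which holds because `δ + k u` lies between `δ + u` and `k (δ + u)`.
Integrating it gives `φ(l t) ≤ l · max(l^(p-1), l) · φ(t)`, and with `k = 2` it gives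
`t φ'(t) ≤ K φ(t)` for a constant `K = K(p)`. For the first inequality apply the plain Young
inequality to `(l t, s)`; for the second compare `s` with `l t`: if `s ≤ l t` both terms are
small multiples of `t φ'(t)`, otherwise both are bounded by multiples of `s φ'(s)`.
Choosing `l` so small that `max(l^(p-1), l) ≤ ε / (2K)` gives the theorem.
-/

open Filter Topology MeasureTheory

section

variable {p δ : ℝ}

lemma phiDeriv_zero : phiDeriv p δ 0 = 0 := by
  simp [phiDeriv]

lemma phiDeriv_nonneg (hδ : 0 ≤ δ) {t : ℝ} (ht : 0 ≤ t) : 0 ≤ phiDeriv p δ t :=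
  mul_nonneg (Real.rpow_nonneg (by linarith) _) ht

lemma add_mul_rpow_sub_two_le (hδ : 0 ≤ δ) {k u : ℝ} (hk : 0 < k) (hu : 0 < u) :
    (δ + k * u) ^ (p - 2) ≤ max (k ^ (p - 2)) 1 * (δ + u) ^ (p - 2) := by
  have hb : 0 < δ + u := by linarith
  have hm : 0 < δ + k * u := by positivity
  have hkb : (k * (δ + u)) ^ (p - 2) = k ^ (p - 2) * (δ + u) ^ (p - 2) :=
    Real.mul_rpow hk.le hb.le
  have hb' := Real.rpow_nonneg hb.le (p - 2)
  suffices (δ + k * u) ^ (p - 2) ≤ k ^ (p - 2) * (δ + u) ^ (p - 2) ∨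
      (δ + k * u) ^ (p - 2) ≤ (δ + u) ^ (p - 2) by
    rcases this with h | h
    · exact h.trans (by gcongr; exact le_max_left _ _)
    · exact h.trans (le_mul_of_one_le_left hb' (le_max_right _ _))
  rcases le_total k 1 with hk1 | hk1 <;> rcases le_total p 2 with hp2 | hp2
  · left; rw [← hkb]; exact Real.rpow_le_rpow_of_nonpos (by positivity) (by nlinarith) (by linarith)
  · right; exact Real.rpow_le_rpow hm.le (by nlinarith) (by linarith)
  · right; exact Real.rpow_le_rpow_of_nonpos hb (by nlinarith) (by linarith)
  · left; rw [← hkb]; exact Real.rpow_le_rpow hm.le (by nlinarith) (by linarith)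

lemma phiDeriv_mul_le (hδ : 0 ≤ δ) {k u : ℝ} (hk : 0 < k) (hu : 0 ≤ u) :
    phiDeriv p δ (k * u) ≤ max (k ^ (p - 1)) k * phiDeriv p δ u := by
  rcases hu.eq_or_lt with rfl | hu
  · simp [phiDeriv_zero]
  have hpow : k ^ (p - 1) = k ^ (p - 2) * k := by
    rw [← Real.rpow_add_one hk.ne']; ring_nf
  calc phiDeriv p δ (k * u) = (δ + k * u) ^ (p - 2) * k * u := by rw [phiDeriv, mul_assoc]
    _ ≤ max (k ^ (p - 2)) 1 * (δ + u) ^ (p - 2) * k * u := by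
        gcongr; exact add_mul_rpow_sub_two_le hδ hk hu
    _ = max (k ^ (p - 1)) k * phiDeriv p δ u := by
        rw [hpow, show max (k ^ (p - 2) * k) k = max (k ^ (p - 2)) 1 * k by
          rw [max_mul_of_nonneg _ _ hk.le, one_mul], phiDeriv]
        ring

lemma phiDeriv_monotoneOn (hp : 1 ≤ p) (hδ : 0 ≤ δ) :
    MonotoneOn (phiDeriv p δ) (Set.Ici 0) := by
  intro a (ha : 0 ≤ a) b (hb : 0 ≤ b) hab
  rcases ha.eq_or_lt with rfl | ha
  · rw [phiDeriv_zero]; exact phiDeriv_nonneg hδ hb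
  have hb : 0 < b := ha.trans_le hab
  have hk : a / b ≤ 1 := (div_le_one hb).2 hab
  calc phiDeriv p δ a = phiDeriv p δ (a / b * b) := by rw [div_mul_cancel₀ _ hb.ne']
    _ ≤ max ((a / b) ^ (p - 1)) (a / b) * phiDeriv p δ b :=
        phiDeriv_mul_le hδ (by positivity) hb.le
    _ ≤ 1 * phiDeriv p δ b := by
        gcongr
        · exact phiDeriv_nonneg hδ hb.le
        · exact max_le (Real.rpow_le_one (by positivity) hk (by linarith)) hk
    _ = phiDeriv p δ b := one_mul _

lemma intervalIntegrable_phiDeriv (hp : 1 ≤ p) (hδ : 0 ≤ δ) {a b : ℝ} (ha : 0 ≤ a)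
    (hb : 0 ≤ b) : IntervalIntegrable (phiDeriv p δ) volume a b :=
  ((phiDeriv_monotoneOn hp hδ).mono fun _ hx => (le_min ha hb).trans hx.1).intervalIntegrable

lemma phiFun_nonneg (hδ : 0 ≤ δ) {t : ℝ} (ht : 0 ≤ t) : 0 ≤ phiFun p δ t :=
  intervalIntegral.integral_nonneg ht fun _ hu => phiDeriv_nonneg hδ hu.1

lemma phiFun_mul_le (hp : 1 ≤ p) (hδ : 0 ≤ δ) {k t : ℝ} (hk : 0 < k) (ht : 0 ≤ t) :
    phiFun p δ (k * t) ≤ k * max (k ^ (p - 1)) k * phiFun p δ t := by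
  have hsub : phiFun p δ (k * t) = k * ∫ u in (0:ℝ)..t, phiDeriv p δ (k * u) := by
    rw [intervalIntegral.mul_integral_comp_mul_left, mul_zero]; rfl
  have hint : IntervalIntegrable (fun u => phiDeriv p δ (k * u)) volume 0 t := by
    refine MonotoneOn.intervalIntegrable fun x hx y hy hxy => ?_
    rw [Set.uIcc_of_le ht] at hx hy
    exact phiDeriv_monotoneOn hp hδ (mul_nonneg hk.le hx.1) (mul_nonneg hk.le hy.1)
      (mul_le_mul_of_nonneg_left hxy hk.le)
  rw [hsub, mul_assoc]
  gcongr
  calc ∫ u in (0:ℝ)..t, phiDeriv p δ (k * u)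
      ≤ ∫ u in (0:ℝ)..t, max (k ^ (p - 1)) k * phiDeriv p δ u :=
        intervalIntegral.integral_mono_on ht hint
          ((intervalIntegrable_phiDeriv hp hδ le_rfl ht).const_mul _)
          fun _ hu => phiDeriv_mul_le hδ hk hu.1
    _ = max (k ^ (p - 1)) k * phiFun p δ t := intervalIntegral.integral_const_mul _ _

lemma half_mul_phiDeriv_half_le_phiFun (hp : 1 ≤ p) (hδ : 0 ≤ δ) {t : ℝ} (ht : 0 ≤ t) :
    t / 2 * phiDeriv p δ (t / 2) ≤ phiFun p δ t := by
  have ht2 : 0 ≤ t / 2 := by positivity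
  have hfirst : 0 ≤ ∫ u in (0:ℝ)..t / 2, phiDeriv p δ u := phiFun_nonneg hδ ht2
  have hsecond : ∫ _ in t / 2..t, phiDeriv p δ (t / 2) ≤ ∫ u in t / 2..t, phiDeriv p δ u :=
    intervalIntegral.integral_mono_on (by linarith) intervalIntegrable_const
      (intervalIntegrable_phiDeriv hp hδ ht2 ht)
      fun _ hu => phiDeriv_monotoneOn hp hδ ht2 (ht2.trans hu.1) hu.1
  rw [intervalIntegral.integral_const, smul_eq_mul, show t - t / 2 = t / 2 by ring] at hsecond
  calc t / 2 * phiDeriv p δ (t / 2)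
      ≤ (∫ u in (0:ℝ)..t / 2, phiDeriv p δ u) + ∫ u in t / 2..t, phiDeriv p δ u := by linarith
    _ = phiFun p δ t := intervalIntegral.integral_add_adjacent_intervals
        (intervalIntegrable_phiDeriv hp hδ le_rfl ht2) (intervalIntegrable_phiDeriv hp hδ ht2 ht)

lemma mul_phiDeriv_le_phiFun (hp : 1 ≤ p) (hδ : 0 ≤ δ) {t : ℝ} (ht : 0 ≤ t) :
    t * phiDeriv p δ t ≤ 2 * max (2 ^ (p - 1)) 2 * phiFun p δ t := by
  have h := phiDeriv_mul_le (p := p) hδ two_pos (by positivity : 0 ≤ t / 2)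
  rw [mul_div_cancel₀ t two_ne_zero] at h
  calc t * phiDeriv p δ t ≤ t * (max (2 ^ (p - 1)) 2 * phiDeriv p δ (t / 2)) := by gcongr
    _ = 2 * max (2 ^ (p - 1)) 2 * (t / 2 * phiDeriv p δ (t / 2)) := by ring
    _ ≤ 2 * max (2 ^ (p - 1)) 2 * phiFun p δ t := by
        gcongr; exact half_mul_phiDeriv_half_le_phiFun hp hδ ht

lemma tendsto_phiDeriv_atTop (hp : 1 < p) (hδ : 0 ≤ δ) :
    Tendsto (phiDeriv p δ) atTop atTop := by
  refine tendsto_atTop_mono' _ ?_ ((tendsto_rpow_atTop (by linarith : 0 < p - 1)).atTop_div_const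
    two_pos)
  filter_upwards [eventually_ge_atTop δ, eventually_gt_atTop 0] with u hδu hu
  rw [div_le_iff₀ two_pos]
  calc u ^ (p - 1) ≤ (δ + u) ^ (p - 1) := Real.rpow_le_rpow hu.le (by linarith) (by linarith)
    _ = (δ + u) ^ (p - 2) * (δ + u) := by
        rw [← Real.rpow_add_one (by linarith)]; ring_nf
    _ ≤ (δ + u) ^ (p - 2) * (2 * u) := by gcongr; linarith
    _ = phiDeriv p δ u * 2 := by rw [phiDeriv]; ring

lemma bddAbove_image_mul_sub_phiFun (hp : 1 < p) (hδ : 0 ≤ δ) {s : ℝ} (hs : 0 ≤ s) :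
    BddAbove ((fun t => s * t - phiFun p δ t) '' Set.Ici 0) := by
  obtain ⟨u, hu, hu0⟩ := (((tendsto_phiDeriv_atTop hp hδ).eventually_ge_atTop (2 * s)).and
    (eventually_ge_atTop 0)).exists
  refine ⟨2 * s * u, ?_⟩
  rintro _ ⟨t, ht : 0 ≤ t, rfl⟩
  show s * t - phiFun p δ t ≤ 2 * s * u
  have hφ := phiFun_nonneg (p := p) hδ ht
  rcases le_total t (2 * u) with htu | htu
  · nlinarith
  · have hst : s * t ≤ phiFun p δ t :=
      calc s * t ≤ t / 2 * phiDeriv p δ u := by nlinarith [mul_le_mul_of_nonneg_left hu ht]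
        _ ≤ t / 2 * phiDeriv p δ (t / 2) := by
            gcongr
            exact phiDeriv_monotoneOn hp.le hδ hu0 (show 0 ≤ t / 2 by linarith) (by linarith)
        _ ≤ phiFun p δ t := half_mul_phiDeriv_half_le_phiFun hp.le hδ ht
    nlinarith [mul_nonneg hs hu0]

lemma mul_le_phiFun_add_conjFun (hp : 1 < p) (hδ : 0 ≤ δ) {s t : ℝ} (hs : 0 ≤ s)
    (ht : 0 ≤ t) : t * s ≤ phiFun p δ t + conjFun (phiFun p δ) s := by
  have := le_csSup (bddAbove_image_mul_sub_phiFun hp hδ hs) ⟨t, ht, rfl⟩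
  rw [conjFun]
  linarith [mul_comm s t]

lemma conjFun_phiFun_nonneg (hp : 1 < p) (hδ : 0 ≤ δ) {s : ℝ} (hs : 0 ≤ s) :
    0 ≤ conjFun (phiFun p δ) s :=
  le_csSup (bddAbove_image_mul_sub_phiFun hp hδ hs) ⟨0, Set.mem_Ici.2 le_rfl, by simp [phiFun]⟩

lemma mul_le_phiFun_add_conjFun_scaled (hp : 1 < p) (hδ : 0 ≤ δ) {l s t : ℝ} (hl : 0 < l)
    (hs : 0 ≤ s) (ht : 0 ≤ t) :
    t * s ≤ max (l ^ (p - 1)) l * phiFun p δ t + l⁻¹ * conjFun (phiFun p δ) s := by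
  rw [← mul_le_mul_iff_right₀ hl]
  calc l * (t * s) = l * t * s := by ring
    _ ≤ phiFun p δ (l * t) + conjFun (phiFun p δ) s :=
        mul_le_phiFun_add_conjFun hp hδ hs (mul_nonneg hl.le ht)
    _ ≤ l * max (l ^ (p - 1)) l * phiFun p δ t + conjFun (phiFun p δ) s := by
        gcongr; exact phiFun_mul_le hp.le hδ hl ht
    _ = l * (max (l ^ (p - 1)) l * phiFun p δ t + l⁻¹ * conjFun (phiFun p δ) s) := by
        field_simp

lemma mul_phiDeriv_add_phiDeriv_mul_le (hp : 1 ≤ p) (hδ : 0 ≤ δ) {l s t : ℝ} (hl : 0 < l)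
    (hs : 0 ≤ s) (ht : 0 ≤ t) :
    t * phiDeriv p δ s + phiDeriv p δ t * s ≤
      2 * max (l ^ (p - 1)) l * (t * phiDeriv p δ t) +
        (l⁻¹ + max (l⁻¹ ^ (p - 1)) l⁻¹) * (s * phiDeriv p δ s) := by
  have hφs := phiDeriv_nonneg (p := p) hδ hs
  have hφt := phiDeriv_nonneg (p := p) hδ ht
  rcases le_total s (l * t) with hst | hst
  · have h₁ : phiDeriv p δ s ≤ max (l ^ (p - 1)) l * phiDeriv p δ t :=
      (phiDeriv_monotoneOn hp hδ hs (mul_nonneg hl.le ht) hst).trans (phiDeriv_mul_le hδ hl ht)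
    have h₂ : s ≤ max (l ^ (p - 1)) l * t := hst.trans (by gcongr; exact le_max_right _ _)
    calc t * phiDeriv p δ s + phiDeriv p δ t * s
        ≤ t * (max (l ^ (p - 1)) l * phiDeriv p δ t) + phiDeriv p δ t * (max (l ^ (p - 1)) l * t) :=
          by gcongr
      _ = 2 * max (l ^ (p - 1)) l * (t * phiDeriv p δ t) := by ring
      _ ≤ _ := le_add_of_nonneg_right (mul_nonneg (by positivity) (mul_nonneg hs hφs))
  · have hts : t ≤ l⁻¹ * s := (le_inv_mul_iff₀ hl).2 hst
    have h₁ : phiDeriv p δ t ≤ max (l⁻¹ ^ (p - 1)) l⁻¹ * phiDeriv p δ s :=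
      (phiDeriv_monotoneOn hp hδ ht (mul_nonneg (inv_nonneg.2 hl.le) hs) hts).trans
        (phiDeriv_mul_le hδ (inv_pos.2 hl) hs)
    calc t * phiDeriv p δ s + phiDeriv p δ t * s
        ≤ l⁻¹ * s * phiDeriv p δ s + max (l⁻¹ ^ (p - 1)) l⁻¹ * phiDeriv p δ s * s := by gcongr
      _ = (l⁻¹ + max (l⁻¹ ^ (p - 1)) l⁻¹) * (s * phiDeriv p δ s) := by ring
      _ ≤ _ := le_add_of_nonneg_left (mul_nonneg (by positivity) (mul_nonneg ht hφt))

end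

lemma exists_pos_max_rpow_le {p η : ℝ} (hp : 1 < p) (hη : 0 < η) :
    ∃ l : ℝ, 0 < l ∧ max (l ^ (p - 1)) l ≤ η := by
  have hcont : Tendsto (fun l : ℝ => max (l ^ (p - 1)) l) (𝓝[>] 0) (𝓝 0) := by
    have := ((Real.continuous_rpow_const (by linarith : 0 ≤ p - 1)).max continuous_id).tendsto 0
    simpa [Real.zero_rpow (by linarith : p - 1 ≠ 0)] using this.mono_left nhdsWithin_le_nhds
  obtain ⟨l, hlη, hl⟩ := ((hcont.eventually (ge_mem_nhds hη)).and self_mem_nhdsWithin).exists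
  exact ⟨l, hl, hlη⟩

/-- Refined Young inequality: for `p ∈ (1,∞)` and every `ε > 0` there exists
`c_ε > 0` depending only on `p` and `ε` (independent of `δ`) such that for all
`δ ≥ 0` and all `s, t ≥ 0` one has `t·s ≤ ε·φ(t) + c_ε·φ*(s)` and
`t·φ'(s) + φ'(t)·s ≤ ε·φ(t) + c_ε·φ(s)`. -/
theorem young_refined (p : ℝ) (hp : 1 < p) (ε : ℝ) (hε : 0 < ε) :
    ∃ c : ℝ, 0 < c ∧
      ∀ δ : ℝ, 0 ≤ δ → ∀ s : ℝ, 0 ≤ s → ∀ t : ℝ, 0 ≤ t →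
        t * s ≤ ε * phiFun p δ t + c * conjFun (phiFun p δ) s ∧
        t * phiDeriv p δ s + phiDeriv p δ t * s ≤ ε * phiFun p δ t + c * phiFun p δ s := by
  set K := 2 * max (2 ^ (p - 1)) (2 : ℝ)
  have hK1 : 1 ≤ K := by linarith [le_max_right (2 ^ (p - 1)) (2 : ℝ)]
  obtain ⟨l, hl, hlε⟩ := exists_pos_max_rpow_le hp (by positivity : 0 < ε / (2 * K))
  rw [le_div_iff₀ (by positivity)] at hlε
  refine ⟨K * (l⁻¹ + max (l⁻¹ ^ (p - 1)) l⁻¹), by positivity, fun δ hδ s hs t ht => ⟨?_, ?_⟩⟩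
  · have hM : max (l ^ (p - 1)) l ≤ ε := by nlinarith [le_max_right (l ^ (p - 1)) l]
    have hc : l⁻¹ ≤ K * (l⁻¹ + max (l⁻¹ ^ (p - 1)) l⁻¹) := by
      nlinarith [le_max_right (l⁻¹ ^ (p - 1)) l⁻¹, inv_pos.2 hl]
    calc t * s ≤ max (l ^ (p - 1)) l * phiFun p δ t + l⁻¹ * conjFun (phiFun p δ) s :=
          mul_le_phiFun_add_conjFun_scaled hp hδ hl hs ht
      _ ≤ _ := by
          gcongr
          exacts [phiFun_nonneg hδ ht, conjFun_phiFun_nonneg hp hδ hs]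
  · calc t * phiDeriv p δ s + phiDeriv p δ t * s
        ≤ 2 * max (l ^ (p - 1)) l * (t * phiDeriv p δ t) +
            (l⁻¹ + max (l⁻¹ ^ (p - 1)) l⁻¹) * (s * phiDeriv p δ s) :=
          mul_phiDeriv_add_phiDeriv_mul_le hp.le hδ hl hs ht
      _ ≤ 2 * max (l ^ (p - 1)) l * (K * phiFun p δ t) +
            (l⁻¹ + max (l⁻¹ ^ (p - 1)) l⁻¹) * (K * phiFun p δ s) := by
          gcongr 2 * max (l ^ (p - 1)) l * ?_ + (l⁻¹ + max (l⁻¹ ^ (p - 1)) l⁻¹) * ?_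
          exacts [mul_phiDeriv_le_phiFun hp.le hδ ht, mul_phiDeriv_le_phiFun hp.le hδ hs]
      _ ≤ ε * phiFun p δ t + K * (l⁻¹ + max (l⁻¹ ^ (p - 1)) l⁻¹) * phiFun p δ s := by
          nlinarith [phiFun_nonneg (p := p) hδ ht]
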